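/- Let P be a separative atomless poset. For every p ∈ P, the set I⁰_p = { ⟨h,w⟩ ∈ R_P(P) : for every q ∈ w that is compatible with p there is p′ ∈ dom(h) with p ≤ p′ and p′ compatible with q } is dense in R_P(P). -/

import Mathlib

/-- Restriction `η↾k` of `η ∈ 2^ω` to its first `k` entries, as a finite binary sequence. -/
def restrict (η : ℕ → Bool) (k : ℕ) : List Bool := List.ofFn (fun i : Fin k => η i)

/-- `J ⊆ 2^{<ω}` contains a front above `ν`: every branch of Cantor space extending `ν`
has a restriction belonging to `J`. -/
def FrontAbove (J : Set (List Bool)) (ν : List Bool) : Prop :=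
  ∀ η : ℕ → Bool, restrict η ν.length = ν → ∃ k : ℕ, restrict η k ∈ J

/-- Compatibility in a forcing notion: a common upper bound exists. -/
def PCompat {P : Type} (le : P → P → Prop) (p q : P) : Prop :=
  ∃ r, le p r ∧ le q r

/-- Conditions of the forcing notion `R_S(P)`: pairs `⟨h, w⟩` where `h` is a finite partial
function from `S` to `2^{<ω}` such that compatible elements of `dom h` are comparable and
`h` is monotone (with respect to end-extension), and `w` is a finite subset of `P`. -/
structure RCond (P : Type) [PartialOrder P] (S : Set P) where
  /-- the finite partial function, coded with values in `Option (List Bool)` -/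
  h : P → Option (List Bool)
  /-- the finite side set -/
  w : Finset P
  dom_finite : {p : P | h p ≠ none}.Finite
  dom_subset : ∀ p : P, h p ≠ none → p ∈ S
  dom_comparable : ∀ p₁ p₂ : P, h p₁ ≠ none → h p₂ ≠ none →
    PCompat (· ≤ ·) p₁ p₂ → p₁ ≤ p₂ ∨ p₂ ≤ p₁
  mono : ∀ (p₁ p₂ : P) (ν₁ ν₂ : List Bool),
    h p₁ = some ν₁ → h p₂ = some ν₂ → p₁ ≤ p₂ → ν₁ <+: ν₂

/-- The order of `R_S(P)`. -/
def RCond.le {P : Type} [PartialOrder P] {S : Set P} (r₁ r₂ : RCond P S) : Prop :=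
  (∀ (p : P) (ν : List Bool), r₁.h p = some ν → r₂.h p = some ν) ∧
  r₁.w ⊆ r₂.w ∧
  ∀ q ∈ r₁.w, ∀ (p : P) (ν : List Bool), r₁.h p = some ν →
    PCompat (· ≤ ·) p q →
    (¬ ∃ p' : P, r₁.h p' ≠ none ∧ p ≤ p' ∧ p ≠ p' ∧ PCompat (· ≤ ·) p' q) →
    FrontAbove
      {μ : List Bool | ∃ p₁ : P, r₂.h p₁ = some μ ∧ p ≤ p₁ ∧ PCompat (· ≤ ·) p₁ q ∧
        ∀ p₂ : P, r₂.h p₂ ≠ none → p₁ ≤ p₂ → p₁ ≠ p₂ → ¬ PCompat (· ≤ ·) p₂ q} ν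

/-- A set `D` is dense in a forcing notion if every condition has an upper bound in `D`. -/
def PDense {P : Type} (le : P → P → Prop) (D : Set P) : Prop :=
  ∀ p : P, ∃ q ∈ D, le p q

/-- A poset is atomless if every element has two incompatible extensions. -/
def Atomless (P : Type) [PartialOrder P] : Prop :=
  ∀ p : P, ∃ q₁ q₂ : P, p ≤ q₁ ∧ p ≤ q₂ ∧ ¬ PCompat (· ≤ ·) q₁ q₂

/-- A poset is separative if whenever `p ≰ q` there is `r ≥ q` incompatible with `p`. -/
def Separative (P : Type) [PartialOrder P] : Prop :=
  ∀ p q : P, ¬ p ≤ q → ∃ r : P, q ≤ r ∧ ¬ PCompat (· ≤ ·) p r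

/-!
Given `r = ⟨h, w⟩`, handle the `q ∈ w` compatible with `p` one at a time: pick `s ≥ p, q` and,
by separativity, strengthen it to some `t` that decides every point of the current domain
(`t` lies above it or is incompatible with it). Then `t` can be added to the domain, with the
value of the largest domain point below `t`, unless it is already there. Every point added in
this way carries the value of its immediate predecessor in `dom h`, so for `q ∈ w` and `p₀ ∈ dom h`
as in the definition of the order, the maximal domain points above `p₀` compatible with `q`
carry the value `h(p₀)` itself; hence `J_{p₀,q}` contains `h(p₀)` and trivially a front above it.
-/

section

variable {P : Type} [PartialOrder P]

theorem PCompat.symm {p q : P} (h : PCompat (· ≤ ·) p q) : PCompat (· ≤ ·) q p :=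
  let ⟨r, hp, hq⟩ := h; ⟨r, hq, hp⟩

theorem PCompat.of_le_left {a b c : P} (hab : a ≤ b) (h : PCompat (· ≤ ·) b c) :
    PCompat (· ≤ ·) a c :=
  let ⟨r, hb, hc⟩ := h; ⟨r, hab.trans hb, hc⟩

theorem PCompat.of_le {a b : P} (hab : a ≤ b) : PCompat (· ≤ ·) a b :=
  ⟨b, hab, le_rfl⟩

/-- `t` decides `y`: it forces `y` into the generic filter or out of it. -/
def Decides (t y : P) : Prop :=
  y ≤ t ∨ ¬ PCompat (· ≤ ·) y t

theorem Separative.exists_le_decides (hsep : Separative P) (A : Finset P) (s : P) :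
    ∃ t, s ≤ t ∧ ∀ y ∈ A, Decides t y := by
  classical
  induction A using Finset.induction with
  | empty => exact ⟨s, le_rfl, by simp⟩
  | @insert a A _ ih =>
    obtain ⟨t, hst, ht⟩ := ih
    by_cases hat : a ≤ t
    · refine ⟨t, hst, Finset.forall_mem_insert _ _ _ |>.mpr ⟨Or.inl hat, ht⟩⟩
    · obtain ⟨t', htt', hat'⟩ := hsep a t hat
      refine ⟨t', hst.trans htt', Finset.forall_mem_insert _ _ _ |>.mpr ⟨Or.inr hat', ?_⟩⟩
      intro y hy
      exact (ht y hy).imp (·.trans htt') fun hyt hyt' => hyt (hyt'.symm.of_le_left htt').symm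

namespace RCond

variable {S : Set P}

theorem exists_greatest_dom_le (r : RCond P S) {t : P} (hne : ∃ y, r.h y ≠ none ∧ y ≤ t) :
    ∃ m, r.h m ≠ none ∧ m ≤ t ∧ ∀ y, r.h y ≠ none → y ≤ t → y ≤ m := by
  have hfin : {y | r.h y ≠ none ∧ y ≤ t}.Finite := r.dom_finite.subset fun _ hy => hy.1
  obtain ⟨m, ⟨hm, hmt⟩, hmax⟩ := hfin.exists_maximal hne
  refine ⟨m, hm, hmt, fun y hy hyt => ?_⟩
  rcases r.dom_comparable y m hy hm ⟨t, hyt, hmt⟩ with hym | hmy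
  · exact hym
  · exact hmax ⟨hy, hyt⟩ hmy

open Classical in
noncomputable def update (r : RCond P S) (t : P) (μ : List Bool) (htS : t ∈ S)
    (hdec : ∀ y, r.h y ≠ none → Decides t y)
    (hmono : ∀ y ν, r.h y = some ν → y ≤ t → ν <+: μ) : RCond P S where
  h := Function.update r.h t (some μ)
  w := r.w
  dom_finite := by
    refine (r.dom_finite.insert t).subset fun x hx => ?_
    by_cases hxt : x = t
    · exact Or.inl hxt
    · exact Or.inr (by simpa [hxt] using hx)
  dom_subset x hx := by
    by_cases hxt : x = t
    · exact hxt ▸ htS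
    · exact r.dom_subset x (by simpa [hxt] using hx)
  dom_comparable p₁ p₂ h₁ h₂ hc := by
    by_cases e₁ : p₁ = t <;> by_cases e₂ : p₂ = t
    · exact Or.inl (e₁.trans e₂.symm).le
    · subst e₁
      rcases hdec p₂ (by simpa [e₂] using h₂) with h | h
      · exact Or.inr h
      · exact absurd hc.symm h
    · subst e₂
      rcases hdec p₁ (by simpa [e₁] using h₁) with h | h
      · exact Or.inl h
      · exact absurd hc h
    · exact r.dom_comparable p₁ p₂ (by simpa [e₁] using h₁) (by simpa [e₂] using h₂) hc
  mono p₁ p₂ ν₁ ν₂ h₁ h₂ hle := by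
    by_cases e₁ : p₁ = t <;> by_cases e₂ : p₂ = t
    · subst e₁ e₂
      rw [h₁.symm.trans h₂ |> Option.some_injective _]
    · subst e₁
      have h₂ : r.h p₂ = some ν₂ := by simpa [e₂] using h₂
      rcases hdec p₂ (by simp [h₂]) with h | h
      · exact absurd (le_antisymm h hle) e₂
      · exact absurd (PCompat.of_le hle).symm h
    · subst e₂
      simp only [Function.update_self, Option.some.injEq] at h₂
      exact h₂ ▸ hmono p₁ ν₁ (by simpa [e₁] using h₁) hle
    · exact r.mono p₁ p₂ ν₁ ν₂ (by simpa [e₁] using h₁) (by simpa [e₂] using h₂) hle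

theorem update_h_self {r : RCond P S} {t : P} {μ : List Bool} {htS hdec hmono} :
    (r.update t μ htS hdec hmono).h t = some μ := by
  simp [update]

theorem update_h_of_ne {r : RCond P S} {t x : P} {μ : List Bool} {htS hdec hmono}
    (hxt : x ≠ t) : (r.update t μ htS hdec hmono).h x = r.h x := by
  simp [update, hxt]

theorem update_h_of_eq_some {r : RCond P S} {t x : P} {μ ν : List Bool} {htS hdec hmono}
    (ht : r.h t = none) (hx : r.h x = some ν) : (r.update t μ htS hdec hmono).h x = some ν := by
  rwa [update_h_of_ne]
  rintro rfl
  simp [ht] at hx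

structure Inherits (r r' : RCond P S) : Prop where
  h_ext : ∀ x ν, r.h x = some ν → r'.h x = some ν
  w_eq : r'.w = r.w
  new_val : ∀ x, r'.h x ≠ none → r.h x = none → ∀ p₀ ν, r.h p₀ = some ν → p₀ ≤ x →
    (∀ p', r.h p' ≠ none → p₀ ≤ p' → p' ≤ x → p' = p₀) → r'.h x = some ν

theorem Inherits.refl (r : RCond P S) : Inherits r r :=
  ⟨fun _ _ h => h, rfl, fun _ hx hx' => absurd hx' hx⟩

theorem Inherits.exists_value {r r' : RCond P S} (hinv : Inherits r r') (t : P) :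
    ∃ μ, (∀ y ν, r'.h y = some ν → y ≤ t → ν <+: μ) ∧
      ∀ p₀ ν, r.h p₀ = some ν → p₀ ≤ t →
        (∀ p', r.h p' ≠ none → p₀ ≤ p' → p' ≤ t → p' = p₀) → ν = μ := by
  by_cases hne : ∃ y, r'.h y ≠ none ∧ y ≤ t
  · obtain ⟨m, hm, hmt, hmax⟩ := r'.exists_greatest_dom_le hne
    obtain ⟨μ, hμ⟩ := Option.ne_none_iff_exists'.mp hm
    refine ⟨μ, fun y ν hy hyt => r'.mono y m ν μ hy hμ (hmax y (by simp [hy]) hyt), ?_⟩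
    intro p₀ ν hp₀ hp₀t hpred
    have hp₀' := hinv.h_ext p₀ ν hp₀
    have hp₀m : p₀ ≤ m := hmax p₀ (by simp [hp₀']) hp₀t
    have hmν : r'.h m = some ν := by
      by_cases hrm : r.h m = none
      · exact hinv.new_val m hm hrm p₀ ν hp₀ hp₀m
          fun p' hp' h₁ h₂ => hpred p' hp' h₁ (h₂.trans hmt)
      · rwa [hpred m hrm hp₀m hmt]
    exact Option.some_injective _ (hmν.symm.trans hμ)
  · push Not at hne
    refine ⟨[], fun y ν hy hyt => absurd hyt (hne y (by simp [hy])), ?_⟩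
    intro p₀ ν hp₀ hp₀t _
    exact absurd hp₀t (hne p₀ (by simp [hinv.h_ext p₀ ν hp₀]))

theorem Inherits.update {r r' : RCond P S} (hinv : Inherits r r') {t : P} {μ : List Bool}
    (htS : t ∈ S) (ht : r'.h t = none) (hdec : ∀ y, r'.h y ≠ none → Decides t y)
    (hmono : ∀ y ν, r'.h y = some ν → y ≤ t → ν <+: μ)
    (hval : ∀ p₀ ν, r.h p₀ = some ν → p₀ ≤ t →
      (∀ p', r.h p' ≠ none → p₀ ≤ p' → p' ≤ t → p' = p₀) → ν = μ) :
    Inherits r (r'.update t μ htS hdec hmono) := by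
  refine ⟨fun x ν hx => update_h_of_eq_some ht (hinv.h_ext x ν hx), hinv.w_eq, ?_⟩
  intro x hx hrx p₀ ν hp₀ hp₀x hpred
  by_cases hxt : x = t
  · subst hxt
    rw [update_h_self, hval p₀ ν hp₀ hp₀x hpred]
  · rw [update_h_of_ne hxt] at hx ⊢
    exact hinv.new_val x hx hrx p₀ ν hp₀ hp₀x hpred

theorem Inherits.le {r r' : RCond P S} (hinv : Inherits r r') : r.le r' := by
  refine ⟨hinv.h_ext, hinv.w_eq.ge, fun q _ p₀ ν hp₀ hp₀q hmax => ?_⟩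
  have hp₀' := hinv.h_ext p₀ ν hp₀
  have hfin : {x | r'.h x ≠ none ∧ p₀ ≤ x ∧ PCompat (· ≤ ·) x q}.Finite :=
    r'.dom_finite.subset fun _ hx => hx.1
  obtain ⟨p₁, ⟨hp₁, hp₀p₁, hp₁q⟩, hp₁max⟩ :=
    hfin.exists_maximal ⟨p₀, by simp [hp₀'], le_rfl, hp₀q⟩
  have hp₁ν : r'.h p₁ = some ν := by
    by_cases hrp₁ : r.h p₁ = none
    · refine hinv.new_val p₁ hp₁ hrp₁ p₀ ν hp₀ hp₀p₁ fun p' hp' h₁ h₂ => ?_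
      by_contra hne
      exact hmax ⟨p', hp', h₁, Ne.symm hne, hp₁q.of_le_left h₂⟩
    · by_contra hne
      exact hmax ⟨p₁, hrp₁, hp₀p₁, fun h => hne (h ▸ hp₀'), hp₁q⟩
  refine fun η hη => ⟨ν.length, ?_⟩
  rw [hη]
  refine ⟨p₁, hp₁ν, hp₀p₁, hp₁q, fun p₂ hp₂ hle hne hc => ?_⟩
  exact hne (le_antisymm hle (hp₁max ⟨hp₂, hp₀p₁.trans hle, hc⟩ hle))

theorem Inherits.exists_witness (hsep : Separative P) {r r' : RCond P Set.univ}
    (hinv : Inherits r r') {p q : P} (hq : PCompat (· ≤ ·) q p) :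
    ∃ r'' : RCond P Set.univ, Inherits r r'' ∧ (∀ x ν, r'.h x = some ν → r''.h x = some ν) ∧
      ∃ p' ν, r''.h p' = some ν ∧ p ≤ p' ∧ PCompat (· ≤ ·) p' q := by
  obtain ⟨s, hqs, hps⟩ := hq
  obtain ⟨t, hst, hdec⟩ := hsep.exists_le_decides r'.dom_finite.toFinset s
  replace hdec : ∀ y, r'.h y ≠ none → Decides t y :=
    fun y hy => hdec y (r'.dom_finite.mem_toFinset.mpr hy)
  have htq : PCompat (· ≤ ·) t q := (PCompat.of_le (hqs.trans hst)).symm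
  by_cases ht : r'.h t = none
  · obtain ⟨μ, hmono, hval⟩ := hinv.exists_value t
    exact ⟨r'.update t μ trivial hdec hmono, hinv.update trivial ht hdec hmono hval,
      fun x ν hx => update_h_of_eq_some ht hx, t, μ, update_h_self, hps.trans hst, htq⟩
  · obtain ⟨ν, hν⟩ := Option.ne_none_iff_exists'.mp ht
    exact ⟨r', hinv, fun _ _ h => h, t, ν, hν, hps.trans hst, htq⟩

theorem exists_inherits_witnesses (hsep : Separative P) (p : P) (r : RCond P Set.univ)
    (Q : Finset P) :
    ∃ r' : RCond P Set.univ, Inherits r r' ∧ ∀ q ∈ Q, PCompat (· ≤ ·) q p →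
      ∃ p' ν, r'.h p' = some ν ∧ p ≤ p' ∧ PCompat (· ≤ ·) p' q := by
  classical
  induction Q using Finset.induction with
  | empty => exact ⟨r, Inherits.refl r, by simp⟩
  | @insert a Q _ ih =>
    obtain ⟨r', hinv, hwit⟩ := ih
    by_cases hap : PCompat (· ≤ ·) a p
    · obtain ⟨r'', hinv'', hext, hwit_a⟩ := hinv.exists_witness hsep hap
      refine ⟨r'', hinv'', Finset.forall_mem_insert _ _ _ |>.mpr ⟨fun _ => hwit_a, ?_⟩⟩
      intro q hq hqp
      obtain ⟨p', ν, hp', hpp', hp'q⟩ := hwit q hq hqp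
      exact ⟨p', ν, hext p' ν hp', hpp', hp'q⟩
    · exact ⟨r', hinv, Finset.forall_mem_insert _ _ _ |>.mpr ⟨fun h => absurd h hap, hwit⟩⟩

end RCond

end

theorem rcond_I0_dense_general (P : Type) [PartialOrder P]
    (hsep : Separative P) (p : P) :
    PDense (RCond.le (P := P) (S := Set.univ))
      {r : RCond P Set.univ |
        ∀ q ∈ r.w, PCompat (· ≤ ·) q p →
          ∃ (p' : P) (ν : List Bool), r.h p' = some ν ∧ p ≤ p' ∧ PCompat (· ≤ ·) p' q} := by
  intro r
  obtain ⟨r', hinv, hwit⟩ := RCond.exists_inherits_witnesses hsep p r r.w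
  exact ⟨r', fun q hq => hwit q (hinv.w_eq ▸ hq), hinv.le⟩

/-- For a separative atomless poset `P` and any `p ∈ P`, the set `I⁰_p` of conditions
`⟨h,w⟩` of `R_P(P)` such that every `q ∈ w` compatible with `p` admits some `p′ ∈ dom h`
with `p ≤ p′` and `p′` compatible with `q`, is dense in `R_P(P)`. -/
theorem rcond_I0_dense (P : Type) [PartialOrder P]
    (hsep : Separative P) (hatomless : Atomless P) (p : P) :
    PDense (RCond.le (P := P) (S := Set.univ))
      {r : RCond P Set.univ |
        ∀ q ∈ r.w, PCompat (· ≤ ·) q p →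
          ∃ (p' : P) (ν : List Bool), r.h p' = some ν ∧ p ≤ p' ∧ PCompat (· ≤ ·) p' q} :=
  rcond_I0_dense_general P hsep p
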